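/- Let U ⊆ ℝⁿ be a bounded connected open set with smooth boundary, and let L = Δ + c with c : U → ℝ continuous and bounded. Suppose u ∈ C²(U) ∩ C(closure U) satisfies L u ≤ 0 on U and u ≥ 0 on U, and suppose there exists a supersolution u⁺ ∈ C²(U) ∩ C(closure U) with u⁺ > 0 on closure U and L u⁺ ≤ 0 on U. If u(x₀) = 0 for some x₀ ∈ U, then u ≡ 0 on U. -/

import Mathlib

/-!
Since `u ≥ 0`, replacing `c` by `min c 0` preserves `Δu + c u ≤ 0`, so we may assume
`-K ≤ c ≤ 0`. The zero set of `u` is closed in `U`; it is also open by Hopf's lemma. Indeed, if a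
zero `p` were a limit of points where `u > 0`, there would be a ball `B(y₀, R) ⊆ U` on which
`u > 0` whose boundary meets the zero set at some `z`. For large `α` the barrier
`exp (-α |x - y₀|²) - exp (-α R²)` satisfies `Δh + c h > 0` on the annulus `R/2 < |x - y₀| < R`,
so by the weak minimum principle `u` dominates a positive multiple of it there; this forces the
derivative of `u` at `z` in the direction `y₀ - z` to be positive, whereas `z` is an interior
minimum of `u`. Connectedness of `U` then spreads the zero at `x₀` over all of `U`.
-/

/-- The Euclidean Laplacian of `u : ℝⁿ → ℝ` at `x`, as the sum of second
partial derivatives along the standard basis directions. -/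
noncomputable def lap {n : ℕ} (u : EuclideanSpace ℝ (Fin n) → ℝ)
    (x : EuclideanSpace ℝ (Fin n)) : ℝ :=
  ∑ i : Fin n,
    fderiv ℝ (fun y => fderiv ℝ u y (EuclideanSpace.single i 1)) x
      (EuclideanSpace.single i 1)

open Metric Set Filter
open scoped Topology RealInnerProductSpace

theorem deriv_deriv_nonneg_of_isLocalMin {g : ℝ → ℝ} {t : ℝ} (hmin : IsLocalMin g t)
    (hg : ContinuousAt g t) : 0 ≤ deriv (deriv g) t := by
  -- otherwise the second-derivative test makes `t` a local maximum too, so `g` is locally constant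
  by_contra! hneg
  have hmax := isLocalMax_of_deriv_deriv_neg hneg hmin.deriv_eq_zero hg
  have hconst : g =ᶠ[𝓝 t] fun _ => g t := by
    filter_upwards [hmin, hmax] with s h₁ h₂ using le_antisymm h₂ h₁
  have : deriv (deriv g) t = 0 := by
    rw [hconst.deriv.deriv_eq]
    simp
  exact hneg.ne this

section Line

variable {E : Type*} [NormedAddCommGroup E] [NormedSpace ℝ E] {u : E → ℝ} {x : E}

theorem ContDiffAt.differentiableAt_fderiv_apply (hu : ContDiffAt ℝ 2 u x) (v : E) :
    DifferentiableAt ℝ (fun y => fderiv ℝ u y v) x :=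
  ((hu.fderiv_right (m := 1) le_rfl).differentiableAt one_ne_zero).clm_apply
    (differentiableAt_const v)

theorem ContDiffAt.deriv_deriv_comp_line (hu : ContDiffAt ℝ 2 u x) (e : E) :
    deriv (deriv fun s : ℝ => u (x + s • e)) 0 = fderiv ℝ (fun y => fderiv ℝ u y e) x e := by
  have hline : ∀ s : ℝ, HasDerivAt (fun s : ℝ => x + s • e) e s := fun s => by
    simpa using ((hasDerivAt_id s).smul_const e).const_add x
  have hnear : ∀ᶠ s in 𝓝 (0 : ℝ), DifferentiableAt ℝ u (x + s • e) := by
    have hcont : ContinuousAt (fun s : ℝ => x + s • e) 0 := (hline 0).continuousAt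
    refine hcont.eventually (p := fun y => DifferentiableAt ℝ u y) ?_
    simpa using (hu.eventually (by simp)).mono fun y hy => hy.differentiableAt two_ne_zero
  have hderiv : (deriv fun s : ℝ => u (x + s • e)) =ᶠ[𝓝 0] fun s => fderiv ℝ u (x + s • e) e := by
    filter_upwards [hnear] with s hs
    exact (hs.hasFDerivAt.comp_hasDerivAt s (hline s)).deriv
  rw [hderiv.deriv_eq]
  exact ((hu.differentiableAt_fderiv_apply e).hasFDerivAt.comp_hasDerivAt_of_eq (0 : ℝ)
    (hline 0) (by simp)).deriv

end Line

section Laplacian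

variable {n : ℕ} {u w : EuclideanSpace ℝ (Fin n) → ℝ} {x : EuclideanSpace ℝ (Fin n)}

theorem lap_nonneg_of_isLocalMin (hu : ContDiffAt ℝ 2 u x) (hmin : IsLocalMin u x) :
    0 ≤ lap u x := by
  refine Finset.sum_nonneg fun i _ => ?_
  set e : EuclideanSpace ℝ (Fin n) := EuclideanSpace.single i 1
  set ℓ : ℝ → EuclideanSpace ℝ (Fin n) := fun s => x + s • e
  have hℓ : ContinuousAt ℓ 0 := by fun_prop
  have hℓ0 : ℓ 0 = x := by simp [ℓ]
  rw [← hu.deriv_deriv_comp_line e]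
  exact deriv_deriv_nonneg_of_isLocalMin ((hℓ0 ▸ hmin).comp_continuous hℓ)
    ((hℓ0 ▸ hu.continuousAt).comp hℓ)

theorem lap_sub (hu : ContDiffAt ℝ 2 u x) (hw : ContDiffAt ℝ 2 w x) :
    lap (fun y => u y - w y) x = lap u x - lap w x := by
  rw [lap, lap, lap, ← Finset.sum_sub_distrib]
  refine Finset.sum_congr rfl fun i _ => ?_
  set e : EuclideanSpace ℝ (Fin n) := EuclideanSpace.single i 1
  have hfd : (fun y => fderiv ℝ (fun y => u y - w y) y e)
      =ᶠ[𝓝 x] fun y => fderiv ℝ u y e - fderiv ℝ w y e := by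
    filter_upwards [hu.eventually (by simp), hw.eventually (by simp)] with y hu' hw'
    rw [fderiv_fun_sub (hu'.differentiableAt two_ne_zero) (hw'.differentiableAt two_ne_zero)]
    rfl
  rw [hfd.fderiv_eq, fderiv_fun_sub (hu.differentiableAt_fderiv_apply e)
    (hw.differentiableAt_fderiv_apply e)]
  rfl

theorem lap_const_mul (a : ℝ) (hu : ContDiffAt ℝ 2 u x) :
    lap (fun y => a * u y) x = a * lap u x := by
  rw [lap, lap, Finset.mul_sum]
  refine Finset.sum_congr rfl fun i _ => ?_
  set e : EuclideanSpace ℝ (Fin n) := EuclideanSpace.single i 1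
  have hfd : (fun y => fderiv ℝ (fun y => a * u y) y e) =ᶠ[𝓝 x] fun y => a * fderiv ℝ u y e := by
    filter_upwards [hu.eventually (by simp)] with y hu'
    rw [fderiv_const_mul (hu'.differentiableAt two_ne_zero)]
    rfl
  rw [hfd.fderiv_eq, fderiv_const_mul (hu.differentiableAt_fderiv_apply e)]
  rfl

theorem lap_sub_const (a : ℝ) : lap (fun y => u y - a) x = lap u x := by
  simp only [lap, fderiv_sub_const]

theorem nonneg_of_lap_add_mul_neg {c : EuclideanSpace ℝ (Fin n) → ℝ}
    {A O : Set (EuclideanSpace ℝ (Fin n))} (hA : IsCompact A) (hO : IsOpen O) (hOA : O ⊆ A)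
    (hwA : ContinuousOn w A) (hw : ∀ x ∈ O, ContDiffAt ℝ 2 w x) (hc : ∀ x ∈ O, c x ≤ 0)
    (hLw : ∀ x ∈ O, lap w x + c x * w x < 0) (hbd : ∀ x ∈ A \ O, 0 ≤ w x) :
    ∀ x ∈ A, 0 ≤ w x := by
  intro x hx
  by_contra! hneg
  obtain ⟨x₁, hx₁A, hmin⟩ := hA.exists_isMinOn ⟨x, hx⟩ hwA
  have hx₁neg : w x₁ < 0 := (hmin hx).trans_lt hneg
  have hx₁O : x₁ ∈ O := by
    by_contra h
    exact (hbd x₁ ⟨hx₁A, h⟩).not_gt hx₁neg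
  have hlap := lap_nonneg_of_isLocalMin (hw x₁ hx₁O)
    (hmin.isLocalMin (mem_of_superset (hO.mem_nhds hx₁O) hOA))
  nlinarith [hLw x₁ hx₁O, mul_nonneg_of_nonpos_of_nonpos (hc x₁ hx₁O) hx₁neg.le]

end Laplacian

section Barrier

variable {F : Type*} [NormedAddCommGroup F] [InnerProductSpace ℝ F]

theorem hasFDerivAt_exp_neg_mul_norm_sub_sq (α : ℝ) (y₀ x : F) :
    HasFDerivAt (fun x => Real.exp (-α * ‖x - y₀‖ ^ 2))
      ((-2 * α * Real.exp (-α * ‖x - y₀‖ ^ 2)) • innerSL ℝ (x - y₀)) x := by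
  refine ((((hasFDerivAt_id x).sub_const y₀).norm_sq).const_mul (-α)).exp.congr_fderiv ?_
  ext v
  simp
  ring

noncomputable def hopfBarrier (α R : ℝ) (y₀ x : F) : ℝ :=
  Real.exp (-α * ‖x - y₀‖ ^ 2) - Real.exp (-α * R ^ 2)

theorem contDiff_hopfBarrier {k : WithTop ℕ∞} (α R : ℝ) (y₀ : F) :
    ContDiff ℝ k (hopfBarrier α R y₀) :=
  (Real.contDiff_exp.comp (contDiff_const.mul
    ((contDiff_norm_sq ℝ).comp (contDiff_id.sub contDiff_const)))).sub contDiff_const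

end Barrier

theorem lap_exp_neg_mul_norm_sub_sq {n : ℕ} (α : ℝ) (y₀ x : EuclideanSpace ℝ (Fin n)) :
    lap (fun x => Real.exp (-α * ‖x - y₀‖ ^ 2)) x
      = Real.exp (-α * ‖x - y₀‖ ^ 2) * (4 * α ^ 2 * ‖x - y₀‖ ^ 2 - 2 * α * n) := by
  set G : EuclideanSpace ℝ (Fin n) → ℝ := fun x => Real.exp (-α * ‖x - y₀‖ ^ 2)
  have hcoord (i : Fin n) : HasFDerivAt (fun y : EuclideanSpace ℝ (Fin n) => y i - y₀ i)
      (EuclideanSpace.proj (𝕜 := ℝ) i) x :=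
    (EuclideanSpace.proj (𝕜 := ℝ) i).hasFDerivAt.sub_const (y₀ i)
  have hfirst (i : Fin n) : (fun y => fderiv ℝ G y (EuclideanSpace.single i 1))
      = fun y => -2 * α * (G y * (y i - y₀ i)) := by
    funext y
    rw [(hasFDerivAt_exp_neg_mul_norm_sub_sq α y₀ y).fderiv]
    simp [EuclideanSpace.inner_single_right, G]
    ring
  have hsecond (i : Fin n) : fderiv ℝ (fun y => fderiv ℝ G y (EuclideanSpace.single i 1)) x
      (EuclideanSpace.single i 1) = G x * (4 * α ^ 2 * (x i - y₀ i) ^ 2 - 2 * α) := by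
    rw [hfirst, (((hasFDerivAt_exp_neg_mul_norm_sub_sq α y₀ x).fun_mul (hcoord i)).const_mul
      (-2 * α)).fderiv]
    simp [EuclideanSpace.inner_single_right, G]
    ring
  have hnorm : ∑ i, (x i - y₀ i) ^ 2 = ‖x - y₀‖ ^ 2 := by
    simp [EuclideanSpace.real_norm_sq_eq]
  rw [lap, Finset.sum_congr rfl fun i _ => hsecond i, ← Finset.mul_sum, Finset.sum_sub_distrib,
    ← Finset.mul_sum, hnorm]
  simp only [Finset.sum_const, Finset.card_univ, Fintype.card_fin, nsmul_eq_mul]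
  ring

theorem lap_hopfBarrier_add_mul_pos {n : ℕ} {α R K c : ℝ} {y₀ x : EuclideanSpace ℝ (Fin n)}
    (hα : 1 ≤ α) (hαR : 2 * n + |K| + 1 ≤ α * R ^ 2) (hx : R / 2 ≤ ‖x - y₀‖)
    (hxR : ‖x - y₀‖ ≤ R) (hcK : -K ≤ c) (hc : c ≤ 0) :
    0 < lap (hopfBarrier α R y₀) x + c * hopfBarrier α R y₀ x := by
  have hlap : lap (hopfBarrier α R y₀) x = lap (fun x => Real.exp (-α * ‖x - y₀‖ ^ 2)) x :=
    lap_sub_const _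
  rw [hlap, lap_exp_neg_mul_norm_sub_sq, hopfBarrier]
  set r := ‖x - y₀‖
  have hr2 : R ^ 2 ≤ 4 * r ^ 2 := by nlinarith
  have hrR2 : r ^ 2 ≤ R ^ 2 := by nlinarith
  set e := Real.exp (-α * r ^ 2)
  have he : 0 < e := Real.exp_pos _
  have hC : 0 < Real.exp (-α * R ^ 2) := Real.exp_pos _
  have hCe : Real.exp (-α * R ^ 2) ≤ e := Real.exp_le_exp.2 (by nlinarith)
  have hgrowth : |K| + 1 ≤ 4 * α ^ 2 * r ^ 2 - 2 * α * n := by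
    nlinarith [le_abs_self K]
  have hcK' : -|K| ≤ c := le_trans (neg_le_neg (le_abs_self K)) hcK
  nlinarith [mul_le_mul_of_nonneg_left hgrowth he.le, mul_nonneg (neg_nonneg.2 hc) hC.le,
    mul_le_mul_of_nonneg_right hcK' he.le]

theorem nonneg_on_closedBall_of_pos_on_ball {E : Type*} [NormedAddCommGroup E] [NormedSpace ℝ E]
    {u : E → ℝ} {y₀ : E} {R : ℝ} (hR : R ≠ 0) (hu : ContinuousOn u (closedBall y₀ R))
    (hpos : ∀ x ∈ ball y₀ R, 0 < u x) : ∀ x ∈ closedBall y₀ R, 0 ≤ u x := by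
  rw [← closure_ball y₀ hR] at hu ⊢
  exact fun x hx => continuousWithinAt_const.closure_le hx ((hu x hx).mono subset_closure)
    fun y hy => (hpos y hy).le

section Hopf

variable {n : ℕ} {u c : EuclideanSpace ℝ (Fin n) → ℝ} {y₀ : EuclideanSpace ℝ (Fin n)} {R K : ℝ}

theorem exists_hopfBarrier_le (hR : 0 < R) (hu : ∀ x ∈ closedBall y₀ R, ContDiffAt ℝ 2 u x)
    (hpos : ∀ x ∈ ball y₀ R, 0 < u x) (hc : ∀ x ∈ ball y₀ R, c x ≤ 0)
    (hcK : ∀ x ∈ ball y₀ R, -K ≤ c x) (hLu : ∀ x ∈ ball y₀ R, lap u x + c x * u x ≤ 0) :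
    ∃ α ε : ℝ, 0 < α ∧ 0 < ε ∧
      ∀ x ∈ closedBall y₀ R \ ball y₀ (R / 2), ε * hopfBarrier α R y₀ x ≤ u x := by
  have hucont : ContinuousOn u (closedBall y₀ R) := fun x hx =>
    (hu x hx).continuousAt.continuousWithinAt
  obtain ⟨x₁, hx₁, hmin⟩ := (isCompact_closedBall y₀ (R / 2)).exists_isMinOn
    (nonempty_closedBall.2 (by positivity))
    (hucont.mono (closedBall_subset_closedBall (by linarith)))
  obtain ⟨α, hα1, hαR⟩ : ∃ α : ℝ, 1 ≤ α ∧ 2 * n + |K| + 1 ≤ α * R ^ 2 :=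
    ⟨max 1 ((2 * n + |K| + 1) / R ^ 2), le_max_left _ _,
      (div_le_iff₀ (by positivity)).1 (le_max_right _ _)⟩
  set gap := Real.exp (-α * (R / 2) ^ 2) - Real.exp (-α * R ^ 2)
  have hgap : 0 < gap := sub_pos.2 (Real.exp_lt_exp.2 (by nlinarith))
  -- on the inner sphere `ε * hopfBarrier` equals the minimum of `u` over the inner ball
  set ε := u x₁ / gap
  have hε : 0 < ε := div_pos (hpos x₁ (closedBall_subset_ball (by linarith) hx₁)) hgap
  have hφ : ContDiff ℝ 2 (hopfBarrier α R y₀) := contDiff_hopfBarrier α R y₀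
  refine ⟨α, ε, by linarith, hε, fun x hx => sub_nonneg.1 ?_⟩
  refine nonneg_of_lap_add_mul_neg (w := fun x => u x - ε * hopfBarrier α R y₀ x) (c := c)
    ((isCompact_closedBall y₀ R).diff isOpen_ball) (isOpen_ball.sdiff isClosed_closedBall)
    (sdiff_subset_sdiff ball_subset_closedBall ball_subset_closedBall)
    ((hucont.mono sdiff_subset).sub (continuousOn_const.mul hφ.continuous.continuousOn))
    (fun x hx => (hu x (ball_subset_closedBall hx.1)).sub (contDiffAt_const.mul hφ.contDiffAt))
    (fun x hx => hc x hx.1) ?_ ?_ x hx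
  · rintro x ⟨hxR, hxR2⟩
    rw [lap_sub (hu x (ball_subset_closedBall hxR)) (contDiffAt_const.mul hφ.contDiffAt),
      lap_const_mul ε hφ.contDiffAt]
    rw [mem_closedBall, dist_eq_norm, not_le] at hxR2
    have hbar := lap_hopfBarrier_add_mul_pos hα1 hαR hxR2.le
      (by simpa [dist_eq_norm] using (mem_ball.1 hxR).le) (hcK x hxR) (hc x hxR)
    nlinarith [mul_pos hε hbar, hLu x hxR]
  · rintro x ⟨⟨hxR, hxR2⟩, hxO⟩
    have hux := nonneg_on_closedBall_of_pos_on_ball hR.ne' hucont hpos x hxR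
    simp only [Set.mem_sdiff, mem_ball, mem_closedBall, dist_eq_norm, not_and, not_le,
      not_lt] at hxR hxR2 hxO
    rcases hxR.lt_or_eq with hlt | heq
    · have hnorm : ‖x - y₀‖ = R / 2 := le_antisymm (hxO hlt) hxR2
      have hεφ : ε * hopfBarrier α R y₀ x = u x₁ := by
        rw [hopfBarrier, hnorm, div_mul_cancel₀ _ hgap.ne']
      have hmx : u x₁ ≤ u x := hmin (by rw [mem_closedBall, dist_eq_norm, hnorm])
      linarith
    · simpa [hopfBarrier, heq] using hux

theorem hopf_lemma (hR : 0 < R) (hu : ∀ x ∈ closedBall y₀ R, ContDiffAt ℝ 2 u x)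
    (hpos : ∀ x ∈ ball y₀ R, 0 < u x) (hc : ∀ x ∈ ball y₀ R, c x ≤ 0)
    (hcK : ∀ x ∈ ball y₀ R, -K ≤ c x) (hLu : ∀ x ∈ ball y₀ R, lap u x + c x * u x ≤ 0)
    {z : EuclideanSpace ℝ (Fin n)} (hz : ‖z - y₀‖ = R) (huz : u z = 0) :
    0 < fderiv ℝ u z (y₀ - z) := by
  obtain ⟨α, ε, hα, hε, hle⟩ := exists_hopfBarrier_le hR hu hpos hc hcK hLu
  set A := closedBall y₀ R \ ball y₀ (R / 2)
  set w : EuclideanSpace ℝ (Fin n) → ℝ := fun x => u x - ε * hopfBarrier α R y₀ x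
  have hwz : w z = 0 := by simp [w, hopfBarrier, huz, hz]
  have hmin : IsMinOn w A z := isMinOn_iff.2 fun x hx => hwz ▸ sub_nonneg.2 (hle x hx)
  have hline (t : ℝ) (ht : t ∈ Ioo (0 : ℝ) (1 / 2)) : z + t • (y₀ - z) ∈ A := by
    have hnorm : ‖z + t • (y₀ - z) - y₀‖ = (1 - t) * R := by
      rw [show z + t • (y₀ - z) - y₀ = (1 - t) • (z - y₀) by module, norm_smul, hz,
        Real.norm_of_nonneg (by linarith [ht.2])]
    simp only [A, Set.mem_sdiff, mem_closedBall, mem_ball, dist_eq_norm, hnorm, not_lt]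
    constructor <;> nlinarith [ht.1, ht.2]
  have hcone : y₀ - z ∈ posTangentConeAt A z :=
    mem_posTangentConeAt_of_frequently_mem
      (eventually_of_mem (Ioo_mem_nhdsGT (by norm_num)) hline).frequently
  have hw : HasFDerivAt w (fderiv ℝ u z - ε • ((-2 * α * Real.exp (-α * ‖z - y₀‖ ^ 2)) •
      innerSL ℝ (z - y₀))) z :=
    ((hu z (by simp [dist_eq_norm, hz])).differentiableAt two_ne_zero).hasFDerivAt.sub
      (((hasFDerivAt_exp_neg_mul_norm_sub_sq α y₀ z).sub_const _).const_mul ε)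
  have hnonneg := hmin.localize.hasFDerivWithinAt_nonneg hw.hasFDerivWithinAt hcone
  have hinner : ⟪z - y₀, y₀ - z⟫ = -R ^ 2 := by
    rw [← neg_sub z y₀, inner_neg_right, real_inner_self_eq_norm_sq, hz]
  simp only [sub_apply, smul_apply, innerSL_apply_apply, hinner, smul_eq_mul] at hnonneg
  have : 0 < ε * (2 * α * Real.exp (-α * ‖z - y₀‖ ^ 2) * R ^ 2) := by positivity
  linarith

end Hopf

theorem exists_ball_touching_zero {X : Type*} [MetricSpace X] [ProperSpace X] {U : Set X}
    {f : X → ℝ} {p : X} (hU : IsOpen U) (hf : ContinuousOn f U) (hp : p ∈ U) (hfp : f p = 0)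
    (hfreq : ∃ᶠ x in 𝓝 p, f x ≠ 0) :
    ∃ y₀ z : X, ∃ R > 0, closedBall y₀ R ⊆ U ∧ (∀ x ∈ ball y₀ R, f x ≠ 0) ∧
      dist z y₀ = R ∧ f z = 0 := by
  obtain ⟨δ, hδ, hδU⟩ := nhds_basis_closedBall.mem_iff.1 (hU.mem_nhds hp)
  obtain ⟨y₀, hy₀, hy₀p⟩ := (hfreq.and_eventually (ball_mem_nhds p (half_pos hδ))).exists
  set Z := closedBall p δ ∩ f ⁻¹' {0}
  have hZ : IsCompact Z := (isCompact_closedBall p δ).of_isClosed_subset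
    ((hf.mono hδU).preimage_isClosed_of_isClosed isClosed_closedBall isClosed_singleton)
    inter_subset_left
  have hpZ : p ∈ Z := ⟨mem_closedBall_self hδ.le, hfp⟩
  -- `z` is a zero of `f` nearest to `y₀`
  obtain ⟨z, hzZ, hzd⟩ := hZ.exists_infDist_eq_dist ⟨p, hpZ⟩ y₀
  have hRp : dist y₀ z ≤ dist y₀ p := hzd ▸ infDist_le_dist_of_mem hpZ
  have hball : closedBall y₀ (dist y₀ z) ⊆ closedBall p δ :=
    closedBall_subset_closedBall' (by linarith)
  refine ⟨y₀, z, dist y₀ z, dist_pos.2 fun h => hy₀ (h ▸ hzZ.2), hball.trans hδU, ?_,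
    dist_comm _ _, hzZ.2⟩
  intro x hx hfx
  have hxZ : x ∈ Z := ⟨hball (ball_subset_closedBall hx), hfx⟩
  have := hzd ▸ infDist_le_dist_of_mem (x := y₀) hxZ
  rw [mem_ball, dist_comm] at hx
  linarith

theorem eventually_eq_zero_of_lap_add_mul_nonpos {n : ℕ} {U : Set (EuclideanSpace ℝ (Fin n))}
    {u c : EuclideanSpace ℝ (Fin n) → ℝ} {K : ℝ} (hU : IsOpen U) (hu : ContDiffOn ℝ 2 u U)
    (hnn : ∀ x ∈ U, 0 ≤ u x) (hc : ∀ x ∈ U, c x ≤ 0) (hcK : ∀ x ∈ U, -K ≤ c x)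
    (hLu : ∀ x ∈ U, lap u x + c x * u x ≤ 0) {p : EuclideanSpace ℝ (Fin n)} (hp : p ∈ U)
    (hup : u p = 0) : ∀ᶠ x in 𝓝 p, u x = 0 := by
  by_contra h
  obtain ⟨y₀, z, R, hR, hball, hne, hz, huz⟩ :=
    exists_ball_touching_zero hU hu.continuousOn hp hup (not_eventually.1 h)
  have hzU : z ∈ U := hball (mem_closedBall.2 hz.le)
  have hmin : IsLocalMin u z :=
    mem_of_superset (hU.mem_nhds hzU) fun x hx => huz ▸ hnn x hx
  have hinU {x} (hx : x ∈ ball y₀ R) : x ∈ U := hball (ball_subset_closedBall hx)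
  have hderiv := hopf_lemma hR (fun x hx => hu.contDiffAt (hU.mem_nhds (hball hx)))
    (fun x hx => (hnn x (hinU hx)).lt_of_ne' (hne x hx)) (fun x hx => hc x (hinU hx))
    (fun x hx => hcK x (hinU hx)) (fun x hx => hLu x (hinU hx)) (dist_eq_norm z y₀ ▸ hz) huz
  simp [hmin.fderiv_eq_zero] at hderiv

theorem IsPreconnected.apply_eq_of_eventually_eq {X Y : Type*} [TopologicalSpace X]
    [TopologicalSpace Y] [T1Space Y] {U : Set X} {f : X → Y} {b : Y} (hUc : IsPreconnected U)
    (hU : IsOpen U) (hf : ContinuousOn f U) (hloc : ∀ p ∈ U, f p = b → ∀ᶠ x in 𝓝 p, f x = b)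
    {x₀ : X} (hx₀ : x₀ ∈ U) (h0 : f x₀ = b) : ∀ x ∈ U, f x = b := by
  set V := {x | ∀ᶠ y in 𝓝 x, f y = b}
  suffices hsub : U ⊆ V from fun x hx => (hsub hx).self_of_nhds
  refine hUc.subset_of_closure_inter_subset isOpen_setOfPred_eventually_nhds
    ⟨x₀, hx₀, hloc x₀ hx₀ h0⟩ ?_
  rintro x ⟨hxV, hxU⟩
  refine hloc x hxU (by_contra fun hne => ?_)
  obtain ⟨y, hy, hyV⟩ := (((hf.continuousAt (hU.mem_nhds hxU)).eventually_ne hne).and_frequently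
    (mem_closure_iff_frequently.1 hxV)).exists
  exact hy hyV.self_of_nhds

theorem stmt_8_general {n : ℕ} (U : Set (EuclideanSpace ℝ (Fin n)))
    (hUopen : IsOpen U) (hUconn : IsConnected U)
    (c : EuclideanSpace ℝ (Fin n) → ℝ)
    (hcbdd : ∃ K, ∀ x ∈ U, |c x| ≤ K)
    (u : EuclideanSpace ℝ (Fin n) → ℝ)
    (hu2 : ContDiffOn ℝ 2 u U)
    (hLu : ∀ x ∈ U, lap u x + c x * u x ≤ 0)
    (hunn : ∀ x ∈ U, 0 ≤ u x)
    (x₀ : EuclideanSpace ℝ (Fin n)) (hx₀ : x₀ ∈ U) (hu0 : u x₀ = 0) :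
    ∀ x ∈ U, u x = 0 := by
  obtain ⟨K, hK⟩ := hcbdd
  have hLu' : ∀ x ∈ U, lap u x + min (c x) 0 * u x ≤ 0 := fun x hx =>
    le_trans (by gcongr; exacts [hunn x hx, min_le_left _ _]) (hLu x hx)
  have hcK : ∀ x ∈ U, -K ≤ min (c x) 0 := fun x hx =>
    le_min (neg_le_of_abs_le (hK x hx)) (neg_nonpos.2 ((abs_nonneg _).trans (hK x hx)))
  exact hUconn.isPreconnected.apply_eq_of_eventually_eq hUopen hu2.continuousOn
    (fun p hp hup => eventually_eq_zero_of_lap_add_mul_nonpos hUopen hu2 hunn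
      (fun x _ => min_le_right _ _) hcK hLu' hp hup) hx₀ hu0

theorem stmt_8 {n : ℕ} (U : Set (EuclideanSpace ℝ (Fin n)))
    (hUopen : IsOpen U) (hUbdd : Bornology.IsBounded U) (hUconn : IsConnected U)
    (c : EuclideanSpace ℝ (Fin n) → ℝ)
    (hc : ContinuousOn c U) (hcbdd : ∃ K, ∀ x ∈ U, |c x| ≤ K)
    (u : EuclideanSpace ℝ (Fin n) → ℝ)
    (hu2 : ContDiffOn ℝ 2 u U) (hucont : ContinuousOn u (closure U))
    (hLu : ∀ x ∈ U, lap u x + c x * u x ≤ 0)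
    (hunn : ∀ x ∈ U, 0 ≤ u x)
    (usup : EuclideanSpace ℝ (Fin n) → ℝ)
    (hsup2 : ContDiffOn ℝ 2 usup U) (hsupcont : ContinuousOn usup (closure U))
    (hsuppos : ∀ x ∈ closure U, 0 < usup x)
    (hLsup : ∀ x ∈ U, lap usup x + c x * usup x ≤ 0)
    (x₀ : EuclideanSpace ℝ (Fin n)) (hx₀ : x₀ ∈ U) (hu0 : u x₀ = 0) :
    ∀ x ∈ U, u x = 0 :=
  stmt_8_general U hUopen hUconn c hcbdd u hu2 hLu hunn x₀ hx₀ hu0
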